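/- The columns of the cofactor matrix of the gradient of a twice continuously differentiable map are divergence-free: for y : ℝ³ → ℝ³ of class C², for each i, ∑_α ∂_α (cof Dy)_{iα} = 0 (the Piola identity). -/

import Mathlib

/-!
Expanding the 3×3 adjugate, row `i` of `cof Dy` is the cross product `∇y_{i+1} × ∇y_{i+2}`
(indices mod 3). For scalar `C²` functions `f, g` the product rule gives
`div (∇f × ∇g) = ∇g · curl ∇f - ∇f · curl ∇g`, and both curls vanish because Hessians are
symmetric: contracting a symmetric matrix against the cyclic (Levi-Civita) pattern gives zero.
-/

open MeasureTheory Matrix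

/-- The cofactor matrix: transpose of the adjugate, so `F * (cof F)ᵀ = det F • 1`. -/
noncomputable def cof (A : Matrix (Fin 3) (Fin 3) ℝ) : Matrix (Fin 3) (Fin 3) ℝ :=
  (Matrix.adjugate A)ᵀ

/-- The Jacobian matrix `(Dy)_{iα} = ∂ y_i / ∂ x_α` of a map `y : ℝ³ → ℝ³`. -/
noncomputable def jacobian (y : (Fin 3 → ℝ) → (Fin 3 → ℝ)) (x : Fin 3 → ℝ) :
    Matrix (Fin 3) (Fin 3) ℝ :=
  Matrix.of fun i α => fderiv ℝ y x (Pi.single α 1) i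

theorem cof_apply (A : Matrix (Fin 3) (Fin 3) ℝ) (i α : Fin 3) :
    cof A i α =
      A (i + 1) (α + 1) * A (i + 2) (α + 2) - A (i + 1) (α + 2) * A (i + 2) (α + 1) := by
  fin_cases i <;> fin_cases α <;> simp [cof, adjugate_fin_three] <;> ring

theorem jacobian_apply {y : (Fin 3 → ℝ) → (Fin 3 → ℝ)} {x : Fin 3 → ℝ}
    (hy : DifferentiableAt ℝ y x) (i α : Fin 3) :
    jacobian y x i α = fderiv ℝ (fun z => y z i) x (Pi.single α 1) := by
  rw [fderiv_apply hy]; rfl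

theorem sum_cyclic_mul_sub_eq_zero {R : Type*} [CommRing R] {B : Fin 3 → Fin 3 → R}
    (hB : ∀ a b, B a b = B b a) (c : Fin 3 → R) :
    ∑ α, (B α (α + 1) * c (α + 2) - B α (α + 2) * c (α + 1)) = 0 := by
  simp only [Fin.sum_univ_three, Fin.isValue, Fin.reduceAdd]
  rw [hB 1 0, hB 2 1, hB 2 0]; ring

section
variable {𝕜 E F : Type*} [NontriviallyNormedField 𝕜]
  [NormedAddCommGroup E] [NormedSpace 𝕜 E] [NormedAddCommGroup F] [NormedSpace 𝕜 F]

theorem ContDiff.differentiable_fderiv {f : E → F} (hf : ContDiff 𝕜 2 f) :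
    Differentiable 𝕜 (fderiv 𝕜 f) :=
  (hf.fderiv_right (m := 1) (by norm_num)).differentiable one_ne_zero

theorem ContDiff.differentiable_fderiv_apply {f : E → F} (hf : ContDiff 𝕜 2 f) (v : E) :
    Differentiable 𝕜 (fun z => fderiv 𝕜 f z v) :=
  hf.differentiable_fderiv.clm_apply (differentiable_const v)

theorem fderiv_fderiv_apply {f : E → F} {x : E} (hf : DifferentiableAt 𝕜 (fderiv 𝕜 f) x)
    (u v : E) :
    fderiv 𝕜 (fun z => fderiv 𝕜 f z v) x u = fderiv 𝕜 (fderiv 𝕜 f) x u v := by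
  rw [fderiv_clm_apply hf (differentiableAt_const v)]
  simp

theorem fderiv_fderiv_apply_mul_fderiv_apply {f g : E → 𝕜} (hf : ContDiff 𝕜 2 f)
    (hg : ContDiff 𝕜 2 g) (x u v w : E) :
    fderiv 𝕜 (fun z => fderiv 𝕜 f z v * fderiv 𝕜 g z w) x u =
      fderiv 𝕜 (fderiv 𝕜 f) x u v * fderiv 𝕜 g x w +
        fderiv 𝕜 f x v * fderiv 𝕜 (fderiv 𝕜 g) x u w := by
  rw [fderiv_fun_mul (hf.differentiable_fderiv_apply v x) (hg.differentiable_fderiv_apply w x)]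
  simp only [_root_.add_apply, _root_.smul_apply, smul_eq_mul,
    fderiv_fderiv_apply (hf.differentiable_fderiv x),
    fderiv_fderiv_apply (hg.differentiable_fderiv x)]
  ring

end

theorem sum_fderiv_cross_fderiv_eq_zero {f g : (Fin 3 → ℝ) → ℝ} (hf : ContDiff ℝ 2 f)
    (hg : ContDiff ℝ 2 g) (x : Fin 3 → ℝ) :
    ∑ α : Fin 3, fderiv ℝ (fun z =>
        fderiv ℝ f z (Pi.single (α + 1) 1) * fderiv ℝ g z (Pi.single (α + 2) 1) -
          fderiv ℝ f z (Pi.single (α + 2) 1) * fderiv ℝ g z (Pi.single (α + 1) 1)) x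
        (Pi.single α 1) = 0 := by
  set f₁ := fun a : Fin 3 => fderiv ℝ f x (Pi.single a 1)
  set g₁ := fun a : Fin 3 => fderiv ℝ g x (Pi.single a 1)
  set f₂ := fun a b : Fin 3 => fderiv ℝ (fderiv ℝ f) x (Pi.single a 1) (Pi.single b 1)
  set g₂ := fun a b : Fin 3 => fderiv ℝ (fderiv ℝ g) x (Pi.single a 1) (Pi.single b 1)
  have hf₂ (a b : Fin 3) : f₂ a b = f₂ b a := hf.contDiffAt.isSymmSndFDerivAt (by simp) _ _
  have hg₂ (a b : Fin 3) : g₂ a b = g₂ b a := hg.contDiffAt.isSymmSndFDerivAt (by simp) _ _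
  calc _ = ∑ α, (f₂ α (α + 1) * g₁ (α + 2) - f₂ α (α + 2) * g₁ (α + 1))
        - ∑ α, (g₂ α (α + 1) * f₁ (α + 2) - g₂ α (α + 2) * f₁ (α + 1)) := by
        rw [← Finset.sum_sub_distrib]
        refine Finset.sum_congr rfl fun α _ => ?_
        have hf₁ := hf.differentiable_fderiv_apply
        have hg₁ := hg.differentiable_fderiv_apply
        rw [fderiv_fun_sub ((hf₁ _ x).fun_mul (hg₁ _ x)) ((hf₁ _ x).fun_mul (hg₁ _ x)),
          _root_.sub_apply, fderiv_fderiv_apply_mul_fderiv_apply hf hg,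
          fderiv_fderiv_apply_mul_fderiv_apply hf hg]
        ring
    _ = 0 := by rw [sum_cyclic_mul_sub_eq_zero hf₂, sum_cyclic_mul_sub_eq_zero hg₂, sub_zero]

/-- **Piola identity**: the columns of the cofactor matrix of the gradient of a
`C²` map `y : ℝ³ → ℝ³` are divergence free: `∑_α ∂_α (cof Dy)_{iα} = 0`. -/
theorem piola_identity (y : (Fin 3 → ℝ) → (Fin 3 → ℝ)) (hy : ContDiff ℝ 2 y) :
    ∀ (x : Fin 3 → ℝ) (i : Fin 3),
      ∑ α : Fin 3, fderiv ℝ (fun z => cof (jacobian y z) i α) x (Pi.single α 1) = 0 := by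
  intro x i
  have hy₁ : Differentiable ℝ y := hy.differentiable (by norm_num)
  have hcomp (j : Fin 3) : ContDiff ℝ 2 (fun z => y z j) := contDiff_pi.1 hy j
  simp only [cof_apply, jacobian_apply (hy₁ _)]
  exact sum_fderiv_cross_fderiv_eq_zero (hcomp _) (hcomp _) x
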